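/- Let n ≥ 3 be an integer and let h₁, …, hₙ be real numbers such that all n partial derivatives of g₂ at (h₁,…,hₙ) are equal to a common value λ (i.e., the gradient of g₂ is collinear with (1,…,1)). Then there exists a real number b with h₁ = 2b, h₂ = 9b, and h₃ = h₄ = ⋯ = hₙ = 3b; if moreover h₁ + ⋯ + hₙ = K, then b = K/(3n+5). -/

import Mathlib

/-! At a point where the gradient of `g₂` is `λ (1, …, 1)`, every equation `∂g₂/∂hᵢ = λ` with
`i ≥ 3` reads `S - 3hᵢ - h₁/(n-1) = λ` with `S = Σ hⱼ`, so the coordinates `h₃, …, hₙ` share a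
value `c`, and comparing with `∂g₂/∂h₂ = λ` gives `h₂ = 3c`. Then `S = h₁ + (n+1)c`, and the
equation for `∂g₂/∂h₁` reduces to `(n-2)(2c - 3h₁) = 0`; so `b = h₁/2` works, and
`S = (3n+5)b`. -/

open Finset

theorem Fintype.sum_ite_ne_eq_sub {ι M : Type*} [Fintype ι] [DecidableEq ι] [AddCommGroup M]
    (f : ι → M) (i : ι) : ∑ j, (if j ≠ i then f j else 0) = ∑ j, f j - f i := by
  rw [← sum_filter, filter_ne', sum_erase_eq_sub (mem_univ i)]

theorem Fin.sum_ite_val_ne_eq_sub {n : ℕ} {M : Type*} [AddCommGroup M] (f : Fin n → M)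
    (i : Fin n) : ∑ j : Fin n, (if (j : ℕ) ≠ i then f j else 0) = ∑ j, f j - f i := by
  simp only [ne_eq, ← Fin.ext_iff]
  exact Fintype.sum_ite_ne_eq_sub f i

theorem Fin.sum_eq_of_eq_const_of_two_le {n : ℕ} {M : Type*} [AddCommMonoid M] (hn : 2 ≤ n)
    (f : Fin n → M) (c : M) (hc : ∀ i : Fin n, 2 ≤ (i : ℕ) → f i = c) :
    ∑ i, f i = f ⟨0, by omega⟩ + f ⟨1, by omega⟩ + (n - 2) • c := by
  obtain ⟨m, rfl⟩ : ∃ m, n = m + 2 := ⟨n - 2, by omega⟩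
  have hrest : ∑ i : Fin m, f i.succ.succ = m • c := by
    rw [Finset.sum_congr rfl fun i _ => hc _ (by simp), sum_const]
  simp only [Fin.sum_univ_succ (n := m + 1), Fin.sum_univ_succ (n := m), hrest, ← add_assoc,
    Nat.add_sub_cancel]
  rfl

theorem gradient_system_solution {n S h₀ h₁ c lam : ℝ} (hn : 3 ≤ n)
    (hS : S = h₀ + h₁ + (n - 2) * c)
    (e₀ : (S - h₀) - 1 / (n - 1) * (S - h₀) - 2 * h₀ + 2 / (n - 1) * h₀ = lam)
    (e₁ : S - h₁ - 1 / (n - 1) * h₀ = lam)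
    (e₂ : S - c - 1 / (n - 1) * h₀ - 2 * c = lam) :
    h₁ = 3 * c ∧ 2 * c = 3 * h₀ := by
  have hn₁ : n - 1 ≠ 0 := by linarith
  have hh₁ : h₁ = 3 * c := by linarith
  refine ⟨hh₁, ?_⟩
  have hkey : (n - 2) * (2 * c - 3 * h₀) = 0 := by
    field_simp at e₀ e₂
    linear_combination e₀ - e₂ + hS + hh₁
  have hn₂ : n - 2 ≠ 0 := by linarith
  linarith [(mul_eq_zero.mp hkey).resolve_left hn₂]

theorem stmt_11 (n : ℕ) (hn : 3 ≤ n) (h : Fin n → ℝ) (lam : ℝ)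
    (grad1 : (∑ j : Fin n, if 1 ≤ (j : ℕ) then h j else 0)
        - (1 / ((n : ℝ) - 1)) * (∑ j : Fin n, if 1 ≤ (j : ℕ) then h j else 0)
        - 2 * h ⟨0, by omega⟩ + (2 / ((n : ℝ) - 1)) * h ⟨0, by omega⟩ = lam)
    (grad2 : (∑ j : Fin n, if (j : ℕ) ≠ 1 then h j else 0)
        - (1 / ((n : ℝ) - 1)) * h ⟨0, by omega⟩ = lam)
    (gradi : ∀ i : Fin n, 2 ≤ (i : ℕ) →
        (∑ j : Fin n, if j ≠ i then h j else 0)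
          - (1 / ((n : ℝ) - 1)) * h ⟨0, by omega⟩ - 2 * h i = lam) :
    ∃ b : ℝ, h ⟨0, by omega⟩ = 2 * b ∧ h ⟨1, by omega⟩ = 9 * b ∧
      (∀ i : Fin n, 2 ≤ (i : ℕ) → h i = 3 * b) ∧
      (∀ K : ℝ, ∑ i, h i = K → b = K / (3 * (n : ℝ) + 5)) := by
  simp only [Nat.one_le_iff_ne_zero] at grad1
  rw [Fin.sum_ite_val_ne_eq_sub h ⟨0, by omega⟩] at grad1
  rw [Fin.sum_ite_val_ne_eq_sub h ⟨1, by omega⟩] at grad2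
  simp only [Fintype.sum_ite_ne_eq_sub] at gradi
  set c := h ⟨2, by omega⟩
  have hc : ∀ i : Fin n, 2 ≤ (i : ℕ) → h i = c := fun i hi => by
    linarith [gradi i hi, gradi ⟨2, by omega⟩ le_rfl]
  have hS := Fin.sum_eq_of_eq_const_of_two_le (by omega) h c hc
  rw [nsmul_eq_mul, Nat.cast_sub (by omega), Nat.cast_two] at hS
  obtain ⟨hh₁, hh₀⟩ := gradient_system_solution (by exact_mod_cast hn) hS grad1 grad2
    (gradi ⟨2, by omega⟩ le_rfl)
  refine ⟨h ⟨0, by omega⟩ / 2, by ring, by linarith, fun i hi => by linarith [hc i hi],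
    fun K hK => ?_⟩
  have hn₅ : 3 * (n : ℝ) + 5 ≠ 0 := by positivity
  rw [eq_div_iff hn₅, ← hK, hS]
  linear_combination (-(n : ℝ) - 1) / 2 * hh₀ - hh₁
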